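/- arXiv:1201.1178 — 9 statements merged into one kernel-verified Lean document; each statement's English description precedes it below -/
import Mathlib

section
/- For every integer K ≥ 1 and real λ, μ > 0 and s > 0, there exists a unique ρ > 0 such that s = (λ/μ)ρ + Σ_{k=1}^{K} k ν_ρ(k), where ν_ρ(k) = ρ^k(1-ρ)/(1-ρ^{K+1}) for ρ ≠ 1 and ν_1(k) = 1/(K+1). In other words, the map ρ ↦ (λ/μ)ρ + Σ_{k=1}^K k ν_ρ(k) is a strictly increasing bijection from (0,∞) onto (0,∞). -/
/-- Stationary distribution ν_ρ of an M/M/1/K queue with load ρ (truncated geometric). -/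
noncomputable def nu (K : ℕ) (ρ : ℝ) (k : ℕ) : ℝ :=
  if ρ = 1 then 1 / (K + 1) else ρ ^ k * (1 - ρ) / (1 - ρ ^ (K + 1))

/-- The fixed-point map ρ ↦ (λ/μ) ρ + Σ_{k=1}^K k ν_ρ(k). -/
noncomputable def S (K : ℕ) (lam mu : ℝ) (ρ : ℝ) : ℝ :=
  lam / mu * ρ + ∑ k ∈ Finset.Icc 1 K, (k : ℝ) * nu K ρ k

/-!
For `ρ ≥ 0` the weights `ν_ρ(k)` are `ρ ^ k / ∑_{j ≤ K} ρ ^ j`, so the sum in `S` is the mean of the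
truncated geometric law. This mean is nondecreasing in `ρ`: for `ρ ≤ σ` the likelihood ratio
`(σ / ρ) ^ k` increases with `k`, and a weighted Chebyshev inequality applies. Hence `S` is the
strictly increasing `(λ/μ) ρ` plus a nondecreasing function; it is continuous on `[0, ∞)` with
`S 0 = 0` and `S ρ ≥ (λ/μ) ρ`, so the intermediate value theorem gives surjectivity.
-/

open Finset Set

theorem sum_mul_sum_le_sum_mul_sum_of_monotone_ratio {ι R : Type*} [LinearOrder ι] [CommRing R]
    [LinearOrder R] [IsStrictOrderedRing R] (s : Finset ι) {f p q : ι → R} (hf : Monotone f)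
    (hpq : ∀ ⦃j k⦄, j ≤ k → p k * q j ≤ q k * p j) :
    (∑ i ∈ s, f i * p i) * ∑ i ∈ s, q i ≤ (∑ i ∈ s, f i * q i) * ∑ i ∈ s, p i := by
  set g : ι → ι → R := fun k j => f k * (q k * p j - p k * q j)
  have hg : ∑ k ∈ s, ∑ j ∈ s, g k j =
      (∑ i ∈ s, f i * q i) * ∑ i ∈ s, p i - (∑ i ∈ s, f i * p i) * ∑ i ∈ s, q i := by
    simp only [g, sum_mul_sum, ← sum_sub_distrib, mul_sub, mul_assoc]
  -- symmetrising the double sum in `k ↔ j` makes every term nonnegative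
  have hsymm : 2 * ∑ k ∈ s, ∑ j ∈ s, g k j =
      ∑ k ∈ s, ∑ j ∈ s, (f k - f j) * (q k * p j - p k * q j) := by
    rw [two_mul]
    nth_rw 2 [sum_comm]
    simp only [← sum_add_distrib, g]
    exact sum_congr rfl fun k _ => sum_congr rfl fun j _ => by ring
  have hterm : ∀ k j, 0 ≤ (f k - f j) * (q k * p j - p k * q j) := by
    intro k j
    rcases le_total j k with h | h
    · exact mul_nonneg (sub_nonneg.2 (hf h)) (sub_nonneg.2 (by linarith [hpq h]))
    · exact mul_nonneg_of_nonpos_of_nonpos (sub_nonpos.2 (hf h))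
        (sub_nonpos.2 (by linarith [hpq h]))
  have := sum_nonneg fun k (_ : k ∈ s) => sum_nonneg fun j (_ : j ∈ s) => hterm k j
  linarith

theorem pow_mul_pow_le_pow_mul_pow {R : Type*} [CommSemiring R] [PartialOrder R]
    [IsOrderedRing R] {ρ σ : R} (hρ : 0 ≤ ρ) (hρσ : ρ ≤ σ) {j k : ℕ} (hjk : j ≤ k) :
    ρ ^ k * σ ^ j ≤ σ ^ k * ρ ^ j := by
  obtain ⟨m, rfl⟩ := Nat.exists_eq_add_of_le hjk
  calc ρ ^ (j + m) * σ ^ j = ρ ^ j * σ ^ j * ρ ^ m := by ring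
    _ ≤ ρ ^ j * σ ^ j * σ ^ m :=
      mul_le_mul_of_nonneg_left (pow_le_pow_left₀ hρ hρσ m)
        (mul_nonneg (pow_nonneg hρ j) (pow_nonneg (hρ.trans hρσ) j))
    _ = σ ^ (j + m) * ρ ^ j := by ring

noncomputable def truncGeomMean (K : ℕ) (ρ : ℝ) : ℝ :=
  (∑ k ∈ range (K + 1), (k : ℝ) * ρ ^ k) / ∑ k ∈ range (K + 1), ρ ^ k

theorem nu_eq_pow_div_geom_sum (K : ℕ) (ρ : ℝ) (k : ℕ) :
    nu K ρ k = ρ ^ k / ∑ j ∈ range (K + 1), ρ ^ j := by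
  unfold nu
  split_ifs with h
  · simp [h]
  · rw [← geom_sum_mul_neg, mul_div_mul_right _ _ (sub_ne_zero.2 (Ne.symm h))]

theorem S_eq_add_truncGeomMean (K : ℕ) (lam mu : ℝ) :
    S K lam mu = fun ρ => lam / mu * ρ + truncGeomMean K ρ := by
  funext ρ
  have hrange : ∑ k ∈ Icc 1 K, (k : ℝ) * nu K ρ k = ∑ k ∈ range (K + 1), (k : ℝ) * nu K ρ k := by
    rw [range_eq_Ico, sum_eq_sum_Ico_succ_bot K.succ_pos, Nat.cast_zero, zero_mul, zero_add,
      zero_add, Nat.succ_eq_add_one, Finset.Ico_add_one_right_eq_Icc]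
  rw [S, hrange, truncGeomMean, sum_div]
  simp only [nu_eq_pow_div_geom_sum, mul_div_assoc]

theorem truncGeomMean_zero (K : ℕ) : truncGeomMean K 0 = 0 := by
  rw [truncGeomMean, sum_eq_zero fun k _ => by rcases k with _ | k <;> simp, zero_div]

theorem truncGeomMean_monotoneOn (K : ℕ) : MonotoneOn (truncGeomMean K) (Ici 0) := by
  intro ρ (hρ : 0 ≤ ρ) σ _ hρσ
  rw [truncGeomMean, truncGeomMean, div_le_div_iff₀ (geom_sum_pos hρ K.succ_ne_zero)
    (geom_sum_pos (hρ.trans hρσ) K.succ_ne_zero)]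
  exact sum_mul_sum_le_sum_mul_sum_of_monotone_ratio _ Nat.mono_cast
    fun j k hjk => pow_mul_pow_le_pow_mul_pow hρ hρσ hjk

theorem continuousOn_truncGeomMean (K : ℕ) : ContinuousOn (truncGeomMean K) (Ici 0) :=
  ContinuousOn.div (by fun_prop) (by fun_prop)
    fun ρ (hρ : 0 ≤ ρ) => (geom_sum_pos hρ K.succ_ne_zero).ne'

theorem truncGeomMean_nonneg (K : ℕ) {ρ : ℝ} (hρ : 0 ≤ ρ) : 0 ≤ truncGeomMean K ρ :=
  truncGeomMean_zero K ▸ truncGeomMean_monotoneOn K self_mem_Ici hρ hρ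

theorem S_zero (K : ℕ) (lam mu : ℝ) : S K lam mu 0 = 0 := by
  simp only [S_eq_add_truncGeomMean, truncGeomMean_zero, mul_zero, add_zero]

theorem S_strictMonoOn (K : ℕ) {lam mu : ℝ} (hlm : 0 < lam / mu) :
    StrictMonoOn (S K lam mu) (Ici 0) := by
  rw [S_eq_add_truncGeomMean]
  exact ((strictMono_mul_left_of_pos hlm).strictMonoOn _).add_monotone
    (truncGeomMean_monotoneOn K)

theorem continuousOn_S (K : ℕ) (lam mu : ℝ) : ContinuousOn (S K lam mu) (Ici 0) := by
  rw [S_eq_add_truncGeomMean]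
  exact (continuousOn_const.mul continuousOn_id).add (continuousOn_truncGeomMean K)

theorem surjOn_S (K : ℕ) {lam mu : ℝ} (hlm : 0 < lam / mu) :
    SurjOn (S K lam mu) (Ioi 0) (Ioi 0) := by
  intro s (hs : 0 < s)
  have hb : 0 ≤ s / (lam / mu) := by positivity
  have hsb : s ≤ S K lam mu (s / (lam / mu)) := by
    simp only [S_eq_add_truncGeomMean, mul_div_cancel₀ s hlm.ne']
    exact le_add_of_nonneg_right (truncGeomMean_nonneg K hb)
  obtain ⟨ρ, hρ, hρs⟩ := intermediate_value_Ioc hb ((continuousOn_S K lam mu).mono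
    Icc_subset_Ici_self) ⟨by rwa [S_zero], hsb⟩
  exact ⟨ρ, hρ.1, hρs⟩

theorem fixed_point_exists_unique_general (K : ℕ) (lam mu : ℝ)
    (hlam : 0 < lam) (hmu : 0 < mu) :
    (∀ s : ℝ, 0 < s → ∃! ρ : ℝ, 0 < ρ ∧ s = S K lam mu ρ) ∧
    StrictMonoOn (S K lam mu) (Set.Ioi (0 : ℝ)) ∧
    Set.BijOn (S K lam mu) (Set.Ioi (0 : ℝ)) (Set.Ioi (0 : ℝ)) := by
  have hlm := div_pos hlam hmu
  have hmono : StrictMonoOn (S K lam mu) (Ioi 0) :=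
    (S_strictMonoOn K hlm).mono Ioi_subset_Ici_self
  have hmaps : MapsTo (S K lam mu) (Ioi 0) (Ioi 0) := fun ρ (hρ : 0 < ρ) =>
    S_zero K lam mu ▸ S_strictMonoOn K hlm self_mem_Ici hρ.le hρ
  have hbij : BijOn (S K lam mu) (Ioi 0) (Ioi 0) := ⟨hmaps, hmono.injOn, surjOn_S K hlm⟩
  refine ⟨fun s hs => ?_, hmono, hbij⟩
  obtain ⟨ρ, hρ, rfl⟩ := hbij.surjOn hs
  exact ⟨ρ, ⟨hρ, rfl⟩, fun σ ⟨hσ, hσρ⟩ => hmono.injOn hσ hρ hσρ.symm⟩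

theorem fixed_point_exists_unique (K : ℕ) (hK : 1 ≤ K) (lam mu : ℝ)
    (hlam : 0 < lam) (hmu : 0 < mu) :
    (∀ s : ℝ, 0 < s → ∃! ρ : ℝ, 0 < ρ ∧ s = S K lam mu ρ) ∧
    StrictMonoOn (S K lam mu) (Set.Ioi (0 : ℝ)) ∧
    Set.BijOn (S K lam mu) (Set.Ioi (0 : ℝ)) (Set.Ioi (0 : ℝ)) :=
  fixed_point_exists_unique_general K lam mu hlam hmu
end

section
/- For integer K ≥ 2 and λ, μ > 0, with s(ρ) = (λ/μ)ρ + Σ_{k=1}^K k ν_ρ(k), one has s'(1) = λ/μ + K²/12 + K/6, and the second derivative of ψ = φ ∘ s^{-1} at s₀ = s(1) equals ψ''(s₀) = K(K-1)/(3(K+1)(λ/μ + K²/12 + K/6)²), which is asymptotically equivalent to 48/K³ as K → ∞. -/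
open Filter

/-- Proportion of problematic stations at fixed-point load ρ. -/
noncomputable def phi (K : ℕ) (ρ : ℝ) : ℝ := nu K ρ 0 + nu K ρ K

/-!
Writing `M_m(ρ) = ∑_{j ≤ K} j^m ρ^j`, one has `ν_ρ(k) = ρ^k / M_0(ρ)` for `ρ > 0`, and
`ρ M_m' = M_{m+1}`. Hence `s(ρ) = (λ/μ) ρ + M_1/M_0` has `s'(ρ) = λ/μ + Var(ν_ρ)/ρ`, and at `ρ = 1`
the law `ν_1` is uniform on `{0, …, K}`, with variance `K(K+2)/12`. Likewise
`φ = (1 + ρ^K)/M_0` is critical at `ρ = 1`, with `φ''(1) = K(K-1)/(3(K+1))`. For any `ψ` with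
`ψ ∘ s = φ`, differentiating `ψ' = (φ'/s') ∘ s⁻¹` through a local inverse gives
`ψ'' = (φ'' s' - φ' s'')/s'^3` at `s(1)`, which reduces to `φ''(1)/s'(1)^2` since `φ'(1) = 0`.
-/

open Finset Topology

section LocalInverse

variable {𝕜 : Type*} [NontriviallyNormedField 𝕜] [CompleteSpace 𝕜] {f f' g : 𝕜 → 𝕜} {x₀ : 𝕜}

theorem eventually_hasDerivAt_of_local_left_inverse
    (hf : ∀ᶠ x in 𝓝 x₀, HasStrictDerivAt f (f' x) x ∧ f' x ≠ 0)
    (hgf : ∀ᶠ x in 𝓝 x₀, g (f x) = x) (hfg : ∀ᶠ y in 𝓝 (f x₀), f (g y) = y)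
    (hg : Tendsto g (𝓝 (f x₀)) (𝓝 x₀)) :
    ∀ᶠ y in 𝓝 (f x₀), HasDerivAt g (f' (g y))⁻¹ y := by
  have hg_strict : ∀ᶠ x in 𝓝 x₀, HasStrictDerivAt g (f' x)⁻¹ (f x) :=
    (hf.and hgf.eventually_nhds).mono fun x ⟨⟨hfx, hf'x⟩, hgfx⟩ ↦
      hfx.to_local_left_inverse hf'x hgfx
  filter_upwards [hg.eventually hg_strict, hfg] with y hy hfgy
  rw [hfgy] at hy
  exact hy.hasDerivAt

theorem iteratedDeriv_two_eq_of_comp_eq {φ φ' ψ : 𝕜 → 𝕜} {f'' φ'' : 𝕜}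
    (hf : ∀ᶠ x in 𝓝 x₀, HasStrictDerivAt f (f' x) x) (hφ : ∀ᶠ x in 𝓝 x₀, HasDerivAt φ (φ' x) x)
    (hf' : HasDerivAt f' f'' x₀) (hφ' : HasDerivAt φ' φ'' x₀) (hf₀ : f' x₀ ≠ 0)
    (hψ : ∀ᶠ x in 𝓝 x₀, ψ (f x) = φ x) :
    iteratedDeriv 2 ψ (f x₀) = (φ'' * f' x₀ - φ' x₀ * f'') / f' x₀ ^ 3 := by
  have hfx₀ := hf.self_of_nhds
  set g := hfx₀.localInverse f (f' x₀) x₀ hf₀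
  have hgf : ∀ᶠ x in 𝓝 x₀, g (f x) = x := hfx₀.eventually_left_inverse hf₀
  have hfg : ∀ᶠ y in 𝓝 (f x₀), f (g y) = y := hfx₀.eventually_right_inverse hf₀
  have hg₀ : HasDerivAt g (f' x₀)⁻¹ (f x₀) := (hfx₀.to_localInverse hf₀).hasDerivAt
  have hgx₀ : g (f x₀) = x₀ := hgf.self_of_nhds
  have hg : Tendsto g (𝓝 (f x₀)) (𝓝 x₀) := by
    simpa only [hgx₀] using hg₀.continuousAt.tendsto
  have hg' := eventually_hasDerivAt_of_local_left_inverse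
    (hf.and (hf'.continuousAt.eventually_ne hf₀)) hgf hfg hg
  have hψg : ψ =ᶠ[𝓝 (f x₀)] fun y ↦ φ (g y) :=
    ((hg.eventually hψ).and hfg).mono fun y ⟨hψy, hfgy⟩ ↦ (congrArg ψ hfgy).symm.trans hψy
  have hdψ : deriv ψ =ᶠ[𝓝 (f x₀)] fun y ↦ φ' (g y) * (f' (g y))⁻¹ := by
    filter_upwards [hψg.eventuallyEq_nhds, hg', hg.eventually hφ] with y hψy hgy hφy
    rw [hψy.deriv_eq]
    exact (hφy.comp y hgy).deriv
  have hφ'g : HasDerivAt φ' φ'' (g (f x₀)) := by rwa [hgx₀]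
  have hf'g : HasDerivAt f' f'' (g (f x₀)) := by rwa [hgx₀]
  have hd2ψ : HasDerivAt (fun y ↦ φ' (g y) * (f' (g y))⁻¹) _ (f x₀) :=
    (hφ'g.comp (f x₀) hg₀).mul ((hf'g.comp (f x₀) hg₀).inv (by rwa [Function.comp_apply, hgx₀]))
  rw [iteratedDeriv_succ, iteratedDeriv_one, hdψ.deriv_eq, hd2ψ.deriv]
  simp only [Function.comp_apply, hgx₀]
  field_simp
  ring

end LocalInverse

theorem hasStrictDerivAt_pow_of_ne_zero {𝕜 : Type*} [NontriviallyNormedField 𝕜] (n : ℕ) {x : 𝕜}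
    (hx : x ≠ 0) : HasStrictDerivAt (· ^ n) (x⁻¹ * (n * x ^ n)) x := by
  refine (hasStrictDerivAt_pow n x).congr_deriv ?_
  cases n with
  | zero => simp
  | succ n => rw [Nat.add_sub_cancel, pow_succ]; field_simp

noncomputable def truncGeomMoment (K m : ℕ) (ρ : ℝ) : ℝ :=
  ∑ j ∈ range (K + 1), (j : ℝ) ^ m * ρ ^ j

noncomputable def truncGeomVariance (K : ℕ) (ρ : ℝ) : ℝ :=
  truncGeomMoment K 2 ρ / truncGeomMoment K 0 ρ -
    (truncGeomMoment K 1 ρ / truncGeomMoment K 0 ρ) ^ 2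

namespace truncGeomMoment

variable {K : ℕ} {ρ : ℝ}

theorem hasStrictDerivAt (m : ℕ) (hρ : ρ ≠ 0) :
    HasStrictDerivAt (truncGeomMoment K m) (ρ⁻¹ * truncGeomMoment K (m + 1) ρ) ρ := by
  have h := HasStrictDerivAt.fun_sum fun (j : ℕ) (_ : j ∈ range (K + 1)) ↦
    (hasStrictDerivAt_pow_of_ne_zero j hρ).const_mul ((j : ℝ) ^ m)
  refine h.congr_deriv ?_
  simp only [truncGeomMoment, mul_sum]
  exact sum_congr rfl fun j _ ↦ by ring

theorem zero_pos (hρ : 0 < ρ) : 0 < truncGeomMoment K 0 ρ :=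
  sum_pos (fun j _ ↦ by positivity) nonempty_range_add_one

theorem zero_at_one : truncGeomMoment K 0 1 = K + 1 := by
  simp [truncGeomMoment]

theorem one_at_one : truncGeomMoment K 1 1 = K * (K + 1) / 2 := by
  induction K with
  | zero => simp [truncGeomMoment]
  | succ K ih =>
    simp only [truncGeomMoment] at ih ⊢
    rw [sum_range_succ, ih]; push_cast; ring

theorem two_at_one : truncGeomMoment K 2 1 = K * (K + 1) * (2 * K + 1) / 6 := by
  induction K with
  | zero => simp [truncGeomMoment]
  | succ K ih =>
    simp only [truncGeomMoment] at ih ⊢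
    rw [sum_range_succ, ih]; push_cast; ring

end truncGeomMoment

section TruncatedGeometric

variable {K : ℕ} {ρ : ℝ}

theorem nu_eq_div (hρ : 0 < ρ) (k : ℕ) : nu K ρ k = ρ ^ k / truncGeomMoment K 0 ρ := by
  have hM0 : truncGeomMoment K 0 ρ = ∑ j ∈ range (K + 1), ρ ^ j := by simp [truncGeomMoment]
  rw [nu, hM0]
  split_ifs with h
  · simp [h]
  · have hpow : ρ ^ (K + 1) ≠ 1 := fun h' ↦
      h ((pow_eq_one_iff_of_nonneg hρ.le K.succ_ne_zero).mp h')
    rw [geom_sum_eq h, div_div_eq_mul_div, div_eq_div_iff (sub_ne_zero.2 hpow.symm)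
      (sub_ne_zero.2 hpow)]
    ring

theorem phi_eq_div (hρ : 0 < ρ) : phi K ρ = (1 + ρ ^ K) / truncGeomMoment K 0 ρ := by
  rw [phi, nu_eq_div hρ, nu_eq_div hρ, pow_zero, add_div]

theorem S_eq_of_pos (lam mu : ℝ) (hρ : 0 < ρ) :
    S K lam mu ρ = lam / mu * ρ + truncGeomMoment K 1 ρ / truncGeomMoment K 0 ρ := by
  have hsub : Icc 1 K ⊆ range (K + 1) := fun k hk ↦ by simp at hk ⊢; omega
  rw [S, truncGeomMoment, sum_div, ← sum_subset hsub (fun k hk hk' ↦ ?_)]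
  · simp only [nu_eq_div hρ, pow_one, mul_div_assoc]
  obtain rfl : k = 0 := by simp at hk hk'; omega
  simp

theorem hasStrictDerivAt_S (lam mu : ℝ) (hρ : 0 < ρ) :
    HasStrictDerivAt (S K lam mu) (lam / mu + ρ⁻¹ * truncGeomVariance K ρ) ρ := by
  have hM0 := truncGeomMoment.zero_pos (K := K) hρ
  have h := ((hasStrictDerivAt_id ρ).const_mul (lam / mu)).add
    ((truncGeomMoment.hasStrictDerivAt (K := K) 1 hρ.ne').fun_div
      (truncGeomMoment.hasStrictDerivAt 0 hρ.ne') hM0.ne')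
  refine (h.congr_deriv ?_).congr_of_eventuallyEq
    ((lt_mem_nhds hρ).mono fun x hx ↦ (S_eq_of_pos lam mu hx).symm)
  rw [truncGeomVariance]
  field_simp

theorem truncGeomVariance_one : truncGeomVariance K 1 = K ^ 2 / 12 + K / 6 := by
  rw [truncGeomVariance, truncGeomMoment.zero_at_one, truncGeomMoment.one_at_one,
    truncGeomMoment.two_at_one]
  field_simp
  ring

theorem differentiableAt_truncGeomVariance (hρ : 0 < ρ) :
    DifferentiableAt ℝ (truncGeomVariance K) ρ := by
  have hM0 := (truncGeomMoment.zero_pos (K := K) hρ).ne'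
  have hd := fun m ↦
    (truncGeomMoment.hasStrictDerivAt (K := K) m hρ.ne').hasDerivAt.differentiableAt
  exact ((hd 2).fun_div (hd 0) hM0).fun_sub (((hd 1).fun_div (hd 0) hM0).fun_pow 2)

noncomputable def phiDeriv (K : ℕ) (ρ : ℝ) : ℝ :=
  ρ⁻¹ * ((K * ρ ^ K * truncGeomMoment K 0 ρ - (1 + ρ ^ K) * truncGeomMoment K 1 ρ) /
    truncGeomMoment K 0 ρ ^ 2)

theorem hasDerivAt_phi (hρ : 0 < ρ) : HasDerivAt (phi K) (phiDeriv K ρ) ρ := by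
  have hM0 := truncGeomMoment.zero_pos (K := K) hρ
  have h := ((hasStrictDerivAt_pow_of_ne_zero K hρ.ne').const_add 1).fun_div
    (truncGeomMoment.hasStrictDerivAt 0 hρ.ne') hM0.ne'
  refine (h.hasDerivAt.congr_deriv ?_).congr_of_eventuallyEq
    ((lt_mem_nhds hρ).mono fun x hx ↦ phi_eq_div hx)
  rw [phiDeriv]
  field_simp

theorem phiDeriv_one : phiDeriv K 1 = 0 := by
  rw [phiDeriv, truncGeomMoment.zero_at_one, truncGeomMoment.one_at_one]
  ring

theorem hasDerivAt_phiDeriv_one :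
    HasDerivAt (phiDeriv K) (K * (K - 1) / (3 * (K + 1))) 1 := by
  have hpow := (hasStrictDerivAt_pow_of_ne_zero K (one_ne_zero (α := ℝ))).hasDerivAt
  have hM := fun m ↦ (truncGeomMoment.hasStrictDerivAt (K := K) m one_ne_zero).hasDerivAt
  have hM0 := (truncGeomMoment.zero_pos (K := K) one_pos).ne'
  have hnum := ((hpow.const_mul (K : ℝ)).fun_mul (hM 0)).fun_sub ((hpow.const_add 1).fun_mul (hM 1))
  have h := (hasDerivAt_inv one_ne_zero).fun_mul
    (hnum.fun_div ((hM 0).fun_pow 2) (pow_ne_zero 2 hM0))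
  refine h.congr_deriv ?_
  simp only [Nat.reduceAdd, truncGeomMoment.zero_at_one, truncGeomMoment.one_at_one,
    truncGeomMoment.two_at_one]
  field_simp
  ring

end TruncatedGeometric

theorem tendsto_flatness_ratio {c : ℝ} (hc : 0 ≤ c) :
    Tendsto (fun K : ℕ ↦ (K * (K - 1) / (3 * (K + 1) * (c + K ^ 2 / 12 + K / 6) ^ 2)) /
      (48 / (K : ℝ) ^ 3)) atTop (𝓝 1) := by
  have hlim : Tendsto (fun x : ℝ ↦ (1 - x) / ((1 + x) * (1 + 2 * x + 12 * c * x ^ 2) ^ 2))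
      (𝓝 0) (𝓝 1) := by
    have h : ContinuousAt (fun x : ℝ ↦ (1 - x) / ((1 + x) * (1 + 2 * x + 12 * c * x ^ 2) ^ 2)) 0 :=
      ContinuousAt.div (by fun_prop) (by fun_prop) (by norm_num)
    simpa using h.tendsto
  refine (hlim.comp tendsto_inv_atTop_nhds_zero_nat).congr' ?_
  filter_upwards [eventually_gt_atTop 0] with K hK
  have hK : (0 : ℝ) < K := Nat.cast_pos.mpr hK
  simp only [Function.comp_apply]
  field_simp
  ring

/-- s'(1) = λ/μ + K²/12 + K/6; the second derivative of ψ = φ ∘ s⁻¹ at s₀ = s(1) is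
K(K-1)/(3(K+1)(λ/μ+K²/12+K/6)²), asymptotically 48/K³ as K → ∞. -/
theorem flatness_at_optimum (lam mu : ℝ) (hlam : 0 < lam) (hmu : 0 < mu) :
    (∀ K : ℕ, 2 ≤ K →
      deriv (S K lam mu) 1 = lam / mu + K ^ 2 / 12 + K / 6 ∧
      ∀ ψ : ℝ → ℝ, (∀ ρ : ℝ, 0 < ρ → ψ (S K lam mu ρ) = phi K ρ) →
        iteratedDeriv 2 ψ (S K lam mu 1)
          = K * (K - 1) / (3 * (K + 1) * (lam / mu + K ^ 2 / 12 + K / 6) ^ 2)) ∧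
    Tendsto
      (fun K : ℕ =>
        (K * (K - 1) / (3 * (K + 1) * (lam / mu + K ^ 2 / 12 + K / 6) ^ 2)) /
          (48 / (K : ℝ) ^ 3))
      atTop (nhds 1) := by
  have hc : 0 < lam / mu := div_pos hlam hmu
  refine ⟨fun K _ ↦ ?_, tendsto_flatness_ratio hc.le⟩
  have hS₁ : HasStrictDerivAt (S K lam mu) (lam / mu + K ^ 2 / 12 + K / 6) 1 := by
    simpa only [inv_one, one_mul, truncGeomVariance_one, add_assoc] using
      hasStrictDerivAt_S (K := K) lam mu one_pos
  refine ⟨hS₁.hasDerivAt.deriv, fun ψ hψ ↦ ?_⟩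
  have hpos : ∀ᶠ ρ in 𝓝 (1 : ℝ), 0 < ρ := lt_mem_nhds one_pos
  have hS' : DifferentiableAt ℝ (fun ρ ↦ lam / mu + ρ⁻¹ * truncGeomVariance K ρ) 1 :=
    ((differentiableAt_inv one_ne_zero).mul
      (differentiableAt_truncGeomVariance one_pos)).const_add _
  rw [iteratedDeriv_two_eq_of_comp_eq (hpos.mono fun ρ hρ ↦ hasStrictDerivAt_S lam mu hρ)
    (hpos.mono fun ρ hρ ↦ hasDerivAt_phi hρ) hS'.hasDerivAt hasDerivAt_phiDeriv_one ?_
    (hpos.mono hψ), phiDeriv_one]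
  · simp only [inv_one, one_mul, truncGeomVariance_one, zero_mul, sub_zero]
    field_simp
    ring
  · simp only [inv_one, one_mul, truncGeomVariance_one]
    positivity
end

section
/- Fix ρ > 0 and K ≥ 1. Define for each x ∈ [0,1] the sequence u_0(x) = 1, u_{k+1}(x) = ρ(u_k(x)² − 1) + x. Then there exists a unique increasing sequence x_1 < x_2 < ⋯ < x_{K+1} < ρ such that for each k, the map x ↦ u_k(x) is strictly increasing on [x_{k-1}, ρ] and u_k(x_k) = 0. Consequently, there is a unique x ∈ [0,1] with u_{K+1}(x) = 0 and u_k(x) ≥ 0 for all k ≤ K, i.e. the two-choice fixed-point equation has a unique solution for each ρ. -/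
/-!
As `ρ > 0`, `u_{k+1} = ρ (u_k² - 1) + x` is strictly increasing in `x` wherever `u_k` is
strictly increasing and nonnegative. So if `u_k` increases on `[x_{k-1}, ρ]` with zero `x_k < ρ`,
then `u_{k+1}` increases on `[x_k, ρ]`, where it runs from `x_k - ρ < 0` to `ρ u_k(ρ)² > 0`;
its zero `x_{k+1}` there is found by the intermediate value theorem, and `x_{k+1} < 1` because
`u_k ≥ 1` on `[1, ∞)`. A solution `x` of the fixed-point equation has `x ≤ ρ` and, by induction,
`x ≥ x_k` for every `k`, hence `x = x_{K+1}`.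
-/

open Set

/-- The two-choice fixed-point recurrence: u_0(x) = 1, u_{k+1}(x) = ρ(u_k(x)² - 1) + x. -/
noncomputable def u (ρ x : ℝ) : ℕ → ℝ
  | 0 => 1
  | k + 1 => ρ * ((u ρ x k) ^ 2 - 1) + x

section

variable {ρ : ℝ}

@[simp] lemma u_zero (ρ x : ℝ) : u ρ x 0 = 1 := rfl

lemma u_succ (ρ x : ℝ) (k : ℕ) : u ρ x (k + 1) = ρ * (u ρ x k ^ 2 - 1) + x := rfl

@[simp] lemma u_one (ρ x : ℝ) : u ρ x 1 = x := by simp [u_succ]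

lemma u_succ_self (ρ : ℝ) (k : ℕ) : u ρ ρ (k + 1) = ρ * u ρ ρ k ^ 2 := by
  rw [u_succ]; ring

lemma u_succ_of_eq_zero {x : ℝ} {k : ℕ} (h : u ρ x k = 0) : u ρ x (k + 1) = x - ρ := by
  rw [u_succ, h]; ring

lemma continuous_u (ρ : ℝ) (k : ℕ) : Continuous fun x => u ρ x k := by
  induction k with
  | zero => exact continuous_const
  | succ k ih => simp only [u_succ]; fun_prop

lemma one_le_u (hρ : 0 ≤ ρ) {x : ℝ} (hx : 1 ≤ x) (k : ℕ) : 1 ≤ u ρ x k := by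
  induction k with
  | zero => simp
  | succ k ih =>
    rw [u_succ]
    nlinarith [mul_nonneg hρ (by nlinarith : 0 ≤ u ρ x k ^ 2 - 1)]

lemma u_succ_pos_of_lt (hρ : 0 ≤ ρ) {x : ℝ} (hx : ρ < x) (k : ℕ) : 0 < u ρ x (k + 1) := by
  rw [u_succ]
  nlinarith [mul_nonneg hρ (sq_nonneg (u ρ x k))]

lemma strictMonoOn_u_succ (hρ : 0 ≤ ρ) {s : Set ℝ} {k : ℕ}
    (hmono : StrictMonoOn (fun x => u ρ x k) s) (hnonneg : ∀ x ∈ s, 0 ≤ u ρ x k) :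
    StrictMonoOn (fun x => u ρ x (k + 1)) s := by
  intro a ha b hb hab
  have hsq : u ρ a k ^ 2 ≤ u ρ b k ^ 2 := pow_le_pow_left₀ (hnonneg a ha) (hmono ha hb hab).le 2
  simp only [u_succ]
  nlinarith [mul_le_mul_of_nonneg_left hsq hρ]

structure IsStrictMonoZero (ρ : ℝ) (n : ℕ) (a c : ℝ) : Prop where
  le : a ≤ c
  lt : c < ρ
  strictMonoOn : StrictMonoOn (fun x => u ρ x n) (Icc a ρ)
  eq_zero : u ρ c n = 0

namespace IsStrictMonoZero

variable {n : ℕ} {a c d y : ℝ}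

lemma mem_Icc (h : IsStrictMonoZero ρ n a c) : c ∈ Icc a ρ := ⟨h.le, h.lt.le⟩

lemma eq_of_eq_zero (h : IsStrictMonoZero ρ n a c) (hy : y ∈ Icc a ρ) (hy0 : u ρ y n = 0) :
    y = c :=
  h.strictMonoOn.injOn hy h.mem_Icc (hy0.trans h.eq_zero.symm)

lemma le_of_nonneg (h : IsStrictMonoZero ρ n a c) (hay : a ≤ y) (hyρ : y ≤ ρ)
    (hy : 0 ≤ u ρ y n) : c ≤ y := by
  by_contra! hyc
  have := h.strictMonoOn ⟨hay, hyρ⟩ h.mem_Icc hyc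
  simp only [h.eq_zero] at this
  linarith

lemma nonneg (h : IsStrictMonoZero ρ n a c) (hy : y ∈ Icc c ρ) : 0 ≤ u ρ y n := by
  have := h.strictMonoOn.monotoneOn h.mem_Icc ⟨h.le.trans hy.1, hy.2⟩ hy.1
  simpa only [h.eq_zero] using this

lemma exists_succ (hρ : 0 < ρ) (h : IsStrictMonoZero ρ n a c) :
    ∃ d, IsStrictMonoZero ρ (n + 1) c d := by
  have hmono : StrictMonoOn (fun x => u ρ x (n + 1)) (Icc c ρ) :=
    strictMonoOn_u_succ hρ.le (h.strictMonoOn.mono (Icc_subset_Icc_left h.le))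
      fun _ hy => h.nonneg hy
  have hρpos : 0 < u ρ ρ n := by
    simpa only [h.eq_zero] using h.strictMonoOn h.mem_Icc ⟨h.le.trans h.lt.le, le_rfl⟩ h.lt
  have hsign : (0 : ℝ) ∈ Ioo (u ρ c (n + 1)) (u ρ ρ (n + 1)) := by
    rw [u_succ_of_eq_zero h.eq_zero, u_succ_self]
    exact ⟨sub_neg.2 h.lt, by positivity⟩
  obtain ⟨d, hd, hd0⟩ :=
    intermediate_value_Ioo h.lt.le (continuous_u ρ (n + 1)).continuousOn hsign
  exact ⟨d, ⟨hd.1.le, hd.2, hmono, hd0⟩⟩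

lemma lt_of_succ (h : IsStrictMonoZero ρ n a c) (h' : IsStrictMonoZero ρ (n + 1) c d) :
    c < d := by
  refine h'.le.lt_of_ne fun hcd => ?_
  have := h'.eq_zero
  rw [← hcd, u_succ_of_eq_zero h.eq_zero] at this
  linarith [h.lt]

end IsStrictMonoZero

/-- `x_{k+1}` is the zero of `u_{k+1}` on `[x_k, ρ]`; it is unique (`zeroSeq_succ_eq`), and the
`sInf` only spares the definition an existence proof. -/
noncomputable def zeroSeq (ρ : ℝ) : ℕ → ℝ
  | 0 => 0
  | k + 1 => sInf {y ∈ Icc (zeroSeq ρ k) ρ | u ρ y (k + 1) = 0}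

lemma zeroSeq_succ_eq {k : ℕ} {d : ℝ} (h : IsStrictMonoZero ρ (k + 1) (zeroSeq ρ k) d) :
    zeroSeq ρ (k + 1) = d := by
  have hset : {y ∈ Icc (zeroSeq ρ k) ρ | u ρ y (k + 1) = 0} = {d} := by
    ext y
    exact ⟨fun hy => h.eq_of_eq_zero hy.1 hy.2, fun hy => hy ▸ ⟨h.mem_Icc, h.eq_zero⟩⟩
  rw [zeroSeq, hset, csInf_singleton]

lemma isStrictMonoZero_one_zero_zero (hρ : 0 < ρ) : IsStrictMonoZero ρ 1 0 0 :=
  ⟨le_rfl, hρ, fun _ _ _ _ hab => by simpa using hab, u_one ρ 0⟩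

lemma zeroSeq_one (hρ : 0 < ρ) : zeroSeq ρ 1 = 0 :=
  zeroSeq_succ_eq (isStrictMonoZero_one_zero_zero hρ)

lemma isStrictMonoZero_zeroSeq (hρ : 0 < ρ) (k : ℕ) :
    IsStrictMonoZero ρ (k + 1) (zeroSeq ρ k) (zeroSeq ρ (k + 1)) := by
  induction k with
  | zero => rw [zeroSeq_one hρ]; exact isStrictMonoZero_one_zero_zero hρ
  | succ k ih =>
    obtain ⟨d, hd⟩ := ih.exists_succ hρ
    rwa [zeroSeq_succ_eq hd]

lemma zeroSeq_lt_succ (hρ : 0 < ρ) {k : ℕ} (hk : 1 ≤ k) : zeroSeq ρ k < zeroSeq ρ (k + 1) := by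
  obtain ⟨j, rfl⟩ := Nat.exists_eq_add_of_le' hk
  exact (isStrictMonoZero_zeroSeq hρ j).lt_of_succ (isStrictMonoZero_zeroSeq hρ (j + 1))

lemma monotone_zeroSeq (hρ : 0 < ρ) : Monotone (zeroSeq ρ) :=
  monotone_nat_of_le_succ fun k => (isStrictMonoZero_zeroSeq hρ k).le

lemma zeroSeq_le_of_nonneg (hρ : 0 < ρ) {K : ℕ} {y : ℝ} (hy0 : 0 ≤ y) (hyρ : y ≤ ρ)
    (hy : ∀ k ≤ K, 0 ≤ u ρ y k) : zeroSeq ρ K ≤ y := by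
  induction K with
  | zero => exact hy0
  | succ k ih =>
    exact (isStrictMonoZero_zeroSeq hρ k).le_of_nonneg (ih fun j hj => hy j (by omega)) hyρ
      (hy (k + 1) le_rfl)

end

theorem two_choice_fixed_point_unique_general (K : ℕ) (ρ : ℝ) (hρ : 0 < ρ) :
    (∃ xs : ℕ → ℝ, xs 0 = xs 1 ∧ StrictMonoOn xs (Set.Icc 1 (K + 1)) ∧
      ∀ k, 1 ≤ k → k ≤ K + 1 →
        xs k < ρ ∧
        StrictMonoOn (fun x => u ρ x k) (Set.Icc (xs (k - 1)) ρ) ∧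
        u ρ (xs k) k = 0 ∧
        ∀ y ∈ Set.Icc (xs (k - 1)) ρ, u ρ y k = 0 → y = xs k) ∧
    (∃! x : ℝ, x ∈ Set.Icc (0 : ℝ) 1 ∧ u ρ x (K + 1) = 0 ∧
      ∀ k ≤ K, 0 ≤ u ρ x k) := by
  have hx := isStrictMonoZero_zeroSeq hρ
  refine ⟨⟨zeroSeq ρ, (zeroSeq_one hρ).symm,
    strictMonoOn_of_lt_add_one ordConnected_Icc fun k _ hk _ => zeroSeq_lt_succ hρ hk.1,
    fun k hk _ => ?_⟩, ⟨zeroSeq ρ (K + 1), ⟨⟨?_, ?_⟩, (hx K).eq_zero, ?_⟩, ?_⟩⟩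
  · obtain ⟨j, rfl⟩ := Nat.exists_eq_add_of_le' hk
    exact ⟨(hx j).lt, (hx j).strictMonoOn, (hx j).eq_zero, fun y hy => (hx j).eq_of_eq_zero hy⟩
  · exact monotone_zeroSeq hρ (Nat.zero_le _)
  · by_contra! h
    have := one_le_u hρ.le h.le (K + 1)
    rw [(hx K).eq_zero] at this
    norm_num at this
  · rintro (_ | j) hj
    · simp
    · exact (hx j).nonneg ⟨monotone_zeroSeq hρ (by omega), (hx K).lt.le⟩
  · rintro y ⟨⟨hy0, -⟩, hyK, hy⟩
    have hyρ : y ≤ ρ := not_lt.1 fun h => (u_succ_pos_of_lt hρ.le h K).ne' hyK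
    exact (hx K).eq_of_eq_zero ⟨zeroSeq_le_of_nonneg hρ hy0 hyρ hy, hyρ⟩ hyK

/-- There is an increasing sequence x_1 < ⋯ < x_{K+1} < ρ such that x ↦ u_k(x) is strictly
increasing on [x_{k-1}, ρ] with unique zero x_k; consequently the two-choice fixed-point
equation has a unique solution. (Here x_0 is taken equal to x_1.) -/
theorem two_choice_fixed_point_unique (K : ℕ) (hK : 1 ≤ K) (ρ : ℝ) (hρ : 0 < ρ) :
    (∃ xs : ℕ → ℝ, xs 0 = xs 1 ∧ StrictMonoOn xs (Set.Icc 1 (K + 1)) ∧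
      ∀ k, 1 ≤ k → k ≤ K + 1 →
        xs k < ρ ∧
        StrictMonoOn (fun x => u ρ x k) (Set.Icc (xs (k - 1)) ρ) ∧
        u ρ (xs k) k = 0 ∧
        ∀ y ∈ Set.Icc (xs (k - 1)) ρ, u ρ y k = 0 → y = xs k) ∧
    (∃! x : ℝ, x ∈ Set.Icc (0 : ℝ) 1 ∧ u ρ x (K + 1) = 0 ∧
      ∀ k ≤ K, 0 ≤ u ρ x k) :=
  two_choice_fixed_point_unique_general K ρ hρ
end

section
/- Let ρ ∈ (0,1], K ≥ 1, and let (ū_k)_{0 ≤ k ≤ K+1} satisfy ū_0 = 1, ū_{k+1} = ρ(ū_k² − 1) + ū_1 for 0 ≤ k ≤ K, ū_{K+1} = 0, and ū_k ≥ 0 for k ≤ K. Then ū_1 < ρ, and for all 1 ≤ k ≤ K, ū_k ≤ ū_1^{2^{k-1}}. -/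
/-!
If `ρ ≤ ū₁`, then `v_k = ρ ū_k` satisfies `v_k² ≤ v_{k+1}`, so `v_{K+1} ≥ ρ^{2^{K+1}} > 0`,
contradicting `ū_{K+1} = 0`. Once `ū₁ < ρ ≤ 1`, the recurrence gives
`ū_{k+1} = ρ ū_k² + (ū₁ - ρ) ≤ ū_k²`, and iterating from `ū₁` yields the doubly exponential decay.
-/

section SquaringRecurrence

variable {R : Type*} [Semiring R] [PartialOrder R] [IsOrderedRing R]

theorem pow_two_pow_le_of_sq_le_succ {v : ℕ → R} {n : ℕ} (h0 : 0 ≤ v 0)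
    (hsq : ∀ k < n, v k ^ 2 ≤ v (k + 1)) : ∀ k ≤ n, v 0 ^ 2 ^ k ≤ v k := by
  intro k hk
  induction k with
  | zero => simp
  | succ k ih =>
    calc v 0 ^ 2 ^ (k + 1) = (v 0 ^ 2 ^ k) ^ 2 := by rw [← pow_mul, ← pow_succ]
      _ ≤ v k ^ 2 := pow_le_pow_left₀ (pow_nonneg h0 _) (ih (by omega)) 2
      _ ≤ v (k + 1) := hsq k hk

theorem le_pow_two_pow_of_le_sq_succ {w : ℕ → R} {n : ℕ} (hnonneg : ∀ k ≤ n, 0 ≤ w k)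
    (hsq : ∀ k < n, w (k + 1) ≤ w k ^ 2) : ∀ k ≤ n, w k ≤ w 0 ^ 2 ^ k := by
  intro k hk
  induction k with
  | zero => simp
  | succ k ih =>
    calc w (k + 1) ≤ w k ^ 2 := hsq k hk
      _ ≤ (w 0 ^ 2 ^ k) ^ 2 := pow_le_pow_left₀ (hnonneg k (by omega)) (ih (by omega)) 2
      _ = w 0 ^ 2 ^ (k + 1) := by rw [← pow_mul, ← pow_succ]

end SquaringRecurrence

theorem sq_mul_le_mul_twoChoice_step {ρ c : ℝ} (x : ℝ) (hρ : 0 ≤ ρ) (hρc : ρ ≤ c) :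
    (ρ * x) ^ 2 ≤ ρ * (ρ * (x ^ 2 - 1) + c) := by
  nlinarith [mul_nonneg hρ (sub_nonneg.mpr hρc)]

theorem twoChoice_step_le_sq {ρ c : ℝ} (x : ℝ) (hρ : ρ ≤ 1) (hcρ : c ≤ ρ) :
    ρ * (x ^ 2 - 1) + c ≤ x ^ 2 := by
  nlinarith [mul_nonneg (sub_nonneg.mpr hρ) (sq_nonneg x)]

theorem two_choice_tail_bound_general (K : ℕ) (ρ : ℝ) (hρ0 : 0 < ρ) (hρ1 : ρ ≤ 1)
    (u : ℕ → ℝ) (h0 : u 0 = 1)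
    (hrec : ∀ k ≤ K, u (k + 1) = ρ * ((u k) ^ 2 - 1) + u 1)
    (hend : u (K + 1) = 0)
    (hnonneg : ∀ k ≤ K, 0 ≤ u k) :
    u 1 < ρ ∧ ∀ k, 1 ≤ k → k ≤ K → u k ≤ (u 1) ^ (2 ^ (k - 1)) := by
  have hu1 : u 1 < ρ := by
    by_contra! hρu1
    have hgrowth := pow_two_pow_le_of_sq_le_succ (v := fun k => ρ * u k) (n := K + 1)
      (by simp [h0, hρ0.le]) (fun k hk => by
        simpa only [hrec k (by omega)] using sq_mul_le_mul_twoChoice_step (u k) hρ0.le hρu1)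
      (K + 1) le_rfl
    simp only [h0, mul_one, hend, mul_zero] at hgrowth
    exact (pow_pos hρ0 _).not_ge hgrowth
  refine ⟨hu1, fun k hk1 hkK => ?_⟩
  obtain ⟨j, rfl⟩ : ∃ j, k = j + 1 := ⟨k - 1, by omega⟩
  simpa using le_pow_two_pow_of_le_sq_succ (w := fun j => u (j + 1)) (n := K - 1)
    (fun j hj => hnonneg (j + 1) (by omega))
    (fun j hj => by
      simpa only [hrec (j + 1) (by omega)] using twoChoice_step_le_sq (u (j + 1)) hρ1 hu1.le)
    j (by omega)

/-- Two-choice fixed point: ū_1 < ρ and ū_k ≤ ū_1^{2^{k-1}}. -/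
theorem two_choice_tail_bound (K : ℕ) (hK : 1 ≤ K) (ρ : ℝ) (hρ0 : 0 < ρ) (hρ1 : ρ ≤ 1)
    (u : ℕ → ℝ) (h0 : u 0 = 1)
    (hrec : ∀ k ≤ K, u (k + 1) = ρ * ((u k) ^ 2 - 1) + u 1)
    (hend : u (K + 1) = 0)
    (hnonneg : ∀ k ≤ K, 0 ≤ u k) :
    u 1 < ρ ∧ ∀ k, 1 ≤ k → k ≤ K → u k ≤ (u 1) ^ (2 ^ (k - 1)) :=
  two_choice_tail_bound_general K ρ hρ0 hρ1 u h0 hrec hend hnonneg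
end

section
/- Let K ≥ 1, ρ ∈ (0,1], ε = ρ − ū_1 ≥ 0 where ū satisfies the two-choice fixed point recurrence with ū_{K+1} = 0 and ū_k ≤ ū_1^{2^{k-1}}. Then 0 ≤ ū_1^{2^K} + ū_1 − ρ, hence 0 ≤ exp(−2^K ε) − ε, and consequently ε ≤ K·2^{−K}. -/
/-! Evaluating the recurrence at `k = K` gives `ρ - ū₁ = ρ ū_K² ≤ ū₁^{2^K}`. Since
`ū₁ = ρ - ε ≤ 1 - ε ≤ exp(-ε)`, this yields `ε ≤ exp(-2^K ε)`; and if `ε > K 2^{-K}` the right-hand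
side would be below `exp(-K) ≤ K 2^{-K}`, since `2 ≤ e`. -/

open Real

lemma sq_add_sub_nonneg_of_mul_sq_sub_one_add_eq_zero {x y a ρ : ℝ} (hρ : ρ ≤ 1)
    (hx : 0 ≤ x) (hxy : x ≤ y) (h : ρ * (x ^ 2 - 1) + a = 0) : 0 ≤ y ^ 2 + a - ρ := by
  have hρx : ρ * x ^ 2 ≤ x ^ 2 := by nlinarith [sq_nonneg x]
  nlinarith [pow_le_pow_left₀ hx hxy 2]

lemma pow_le_exp_neg_mul_of_add_le_one {x ε : ℝ} (hx : 0 ≤ x) (hxε : x + ε ≤ 1) (n : ℕ) :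
    x ^ n ≤ exp (-(n * ε)) := by
  have hx_le : x ≤ exp (-ε) := by linarith [add_one_le_exp (-ε)]
  calc x ^ n ≤ exp (-ε) ^ n := pow_le_pow_left₀ hx hx_le n
    _ = exp (-(n * ε)) := by rw [← exp_nat_mul, mul_neg]

lemma two_pow_le_mul_exp {n : ℕ} (hn : 1 ≤ n) : (2 : ℝ) ^ n ≤ n * exp n :=
  calc (2 : ℝ) ^ n ≤ exp 1 ^ n := pow_le_pow_left₀ zero_le_two (by linarith [exp_one_gt_d9]) n
    _ = exp n := by rw [← exp_nat_mul, mul_one]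
    _ ≤ n * exp n := le_mul_of_one_le_left (exp_pos _).le (by exact_mod_cast hn)

lemma le_div_two_pow_of_le_exp_neg {K : ℕ} (hK : 1 ≤ K) {ε : ℝ}
    (h : ε ≤ exp (-(2 ^ K * ε))) : ε ≤ K / 2 ^ K := by
  by_contra! hlt
  have h2K : (0 : ℝ) < 2 ^ K := by positivity
  have hKε : (K : ℝ) < 2 ^ K * ε := by rwa [div_lt_iff₀' h2K] at hlt
  have hexpK : exp (-(K : ℝ)) ≤ K / 2 ^ K := by
    rw [exp_neg, inv_le_iff_one_le_mul₀ (exp_pos _), div_mul_eq_mul_div, le_div_iff₀ h2K, one_mul]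
    exact two_pow_le_mul_exp hK
  have hexp_lt : exp (-(2 ^ K * ε)) < exp (-(K : ℝ)) := exp_lt_exp.mpr (by linarith)
  linarith

theorem two_choice_epsilon_bound_general (K : ℕ) (hK : 1 ≤ K) (ρ : ℝ) (hρ1 : ρ ≤ 1)
    (u : ℕ → ℝ)
    (hrec : ∀ k ≤ K, u (k + 1) = ρ * ((u k) ^ 2 - 1) + u 1)
    (hend : u (K + 1) = 0)
    (hnonneg : ∀ k ≤ K, 0 ≤ u k)
    (hdom : ∀ k, 1 ≤ k → k ≤ K → u k ≤ (u 1) ^ (2 ^ (k - 1)))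
    (ε : ℝ) (hε : ε = ρ - u 1) :
    0 ≤ (u 1) ^ (2 ^ K) + u 1 - ρ ∧
    0 ≤ Real.exp (-(2 ^ K * ε)) - ε ∧
    ε ≤ K / 2 ^ K := by
  have hfix : ρ * (u K ^ 2 - 1) + u 1 = 0 := by rw [← hrec K le_rfl, hend]
  have hbound : 0 ≤ u 1 ^ 2 ^ K + u 1 - ρ := by
    have := sq_add_sub_nonneg_of_mul_sq_sub_one_add_eq_zero hρ1 (hnonneg K le_rfl)
      (hdom K hK le_rfl) hfix
    rwa [← pow_mul, ← pow_succ, Nat.sub_add_cancel hK] at this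
  have hexp : ε ≤ exp (-(2 ^ K * ε)) := by
    have := pow_le_exp_neg_mul_of_add_le_one (ε := ε) (hnonneg 1 hK) (by linarith) (2 ^ K)
    push_cast at this
    linarith
  exact ⟨hbound, by linarith, le_div_two_pow_of_le_exp_neg hK hexp⟩

/-- If ε = ρ - ū_1 ≥ 0 for the two-choice fixed point, then
0 ≤ ū_1^{2^K} + ū_1 - ρ, hence 0 ≤ exp(-2^K ε) - ε, and consequently ε ≤ K 2^{-K}. -/
theorem two_choice_epsilon_bound (K : ℕ) (hK : 1 ≤ K) (ρ : ℝ) (hρ0 : 0 < ρ) (hρ1 : ρ ≤ 1)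
    (u : ℕ → ℝ) (h0 : u 0 = 1)
    (hrec : ∀ k ≤ K, u (k + 1) = ρ * ((u k) ^ 2 - 1) + u 1)
    (hend : u (K + 1) = 0)
    (hnonneg : ∀ k ≤ K, 0 ≤ u k)
    (hdom : ∀ k, 1 ≤ k → k ≤ K → u k ≤ (u 1) ^ (2 ^ (k - 1)))
    (ε : ℝ) (hε : ε = ρ - u 1) (hεpos : 0 ≤ ε) :
    0 ≤ (u 1) ^ (2 ^ K) + u 1 - ρ ∧
    0 ≤ Real.exp (-(2 ^ K * ε)) - ε ∧
    ε ≤ K / 2 ^ K :=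
  two_choice_epsilon_bound_general K hK ρ hρ1 u hrec hend hnonneg hdom ε hε
end

section
/- Let K ≥ 1, ρ ∈ [1 − 2^{−K/2}, 1], and let ū be the two-choice fixed point (ū_0 = 1, ū_{k+1} = ρ(ū_k² − 1) + ū_1, ū_{K+1} = 0, ū_k ≥ 0). Then the proportion of problematic stations ȳ_0 + ȳ_K = (1 − ū_1) + ū_K satisfies ȳ_0 + ȳ_K ≤ 2^{−K/2} + K·2^{−K} + sqrt(K·2^{−K}/(1 − 2^{−K/2})), which is at most 4·√K·2^{−K/2} for all K ≥ 1. -/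
/-!
Write `ε = ρ - ū₁`. The last equation `ū_{K+1} = 0` reads `ρ ū_K² = ε`, and every other step
`ū_{k+1} = ρ ū_k² - ε ≤ ū_k²` squares at most, so `ε ≤ ū_K² ≤ ū₁^{2^K} ≤ (1 - ε)^{2^K} ≤ e^{-ε 2^K}`,
which forces `ε ≤ K 2^{-K}`. Then `1 - ū₁ = (1 - ρ) + ε` and `ū_K = √(ε/ρ)` give the first bound.
With `a = 2^{-K/2}` the right-hand side is `a + (√K a)² + √((√K a)²/(1 - a))`, and `a ≤ 3/4`,
`√K a ≤ 1` bound it by `(1 + 1 + 2) √K a`.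
-/

open Real

theorem le_pow_two_pow_of_le_sq {v : ℕ → ℝ} {n : ℕ} (hv : ∀ k < n, 0 ≤ v k)
    (hstep : ∀ k < n, v (k + 1) ≤ v k ^ 2) : ∀ j ≤ n, v j ≤ v 0 ^ 2 ^ j := by
  intro j
  induction j with
  | zero => simp
  | succ j ih =>
    intro hj
    calc v (j + 1) ≤ v j ^ 2 := hstep j hj
      _ ≤ (v 0 ^ 2 ^ j) ^ 2 := pow_le_pow_left₀ (hv j hj) (ih (by omega)) 2
      _ = v 0 ^ 2 ^ (j + 1) := by rw [← pow_mul, pow_succ]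

theorem le_div_two_pow_of_le_one_sub_pow {ε : ℝ} {K : ℕ} (hK : 1 ≤ K) (hε : ε ≤ 1)
    (h : ε ≤ (1 - ε) ^ 2 ^ K) : ε ≤ K / 2 ^ K := by
  by_contra! hlt
  have hKε : (K : ℝ) < ε * 2 ^ K := by rwa [div_lt_iff₀ (by positivity)] at hlt
  have hexp : (1 - ε) ^ 2 ^ K ≤ exp (-(ε * 2 ^ K)) :=
    calc (1 - ε) ^ 2 ^ K ≤ exp (-ε) ^ 2 ^ K :=
          pow_le_pow_left₀ (by linarith) (one_sub_le_exp_neg ε) _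
      _ = exp (-(ε * 2 ^ K)) := by rw [← exp_nat_mul]; push_cast; ring_nf
  have hhalf : exp (-(ε * 2 ^ K)) < (1 / 2) ^ K :=
    calc exp (-(ε * 2 ^ K)) < exp (-K) := exp_lt_exp.2 (by linarith)
      _ = exp (-1) ^ K := by rw [← exp_nat_mul]; ring_nf
      _ ≤ (1 / 2) ^ K := pow_le_pow_left₀ (exp_pos _).le exp_neg_one_lt_half.le _
  have hK' : ((1 : ℝ) / 2) ^ K ≤ K / 2 ^ K := by
    rw [one_div_pow]
    gcongr
    exact_mod_cast hK
  linarith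

theorem add_sq_add_sqrt_sq_div_le {a s : ℝ} (ha : 0 ≤ a) (ha' : a ≤ 3 / 4) (hs : 1 ≤ s)
    (hsa : s * a ≤ 1) : a + (s * a) ^ 2 + √((s * a) ^ 2 / (1 - a)) ≤ 4 * s * a := by
  have hsa0 : 0 ≤ s * a := by positivity
  have hsqrt : √((s * a) ^ 2 / (1 - a)) ≤ 2 * (s * a) := by
    rw [sqrt_le_left (by positivity), div_le_iff₀ (by linarith)]
    nlinarith [sq_nonneg (s * a)]
  nlinarith

theorem two_rpow_neg_half_sq (K : ℕ) : ((2 : ℝ) ^ (-(K : ℝ) / 2)) ^ 2 = (2 ^ K)⁻¹ := by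
  rw [← rpow_natCast, ← rpow_mul (by norm_num)]
  push_cast
  rw [div_mul_cancel₀ _ two_ne_zero, rpow_neg zero_le_two, rpow_natCast]

section FixedPoint

variable {K : ℕ} {ρ : ℝ} {u : ℕ → ℝ}

theorem fixedPoint_mul_sq_eq (hrec : ∀ k ≤ K, u (k + 1) = ρ * (u k ^ 2 - 1) + u 1)
    (hend : u (K + 1) = 0) : ρ * u K ^ 2 = ρ - u 1 := by
  linarith [hrec K le_rfl]

theorem fixedPoint_sq_le_pow (hK : 1 ≤ K) (hρ0 : 0 ≤ ρ) (hρ1 : ρ ≤ 1)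
    (hrec : ∀ k ≤ K, u (k + 1) = ρ * (u k ^ 2 - 1) + u 1) (hend : u (K + 1) = 0)
    (hnonneg : ∀ k ≤ K, 0 ≤ u k) : u K ^ 2 ≤ u 1 ^ 2 ^ K := by
  have hε : 0 ≤ ρ - u 1 := by
    rw [← fixedPoint_mul_sq_eq hrec hend]
    positivity
  obtain ⟨m, rfl⟩ := Nat.exists_eq_add_of_le' hK
  have hm := le_pow_two_pow_of_le_sq (v := fun k ↦ u (k + 1)) (n := m)
    (fun k hk ↦ hnonneg (k + 1) (by omega))
    (fun k hk ↦ by nlinarith [hrec (k + 1) (by omega), sq_nonneg (u (k + 1))]) m le_rfl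
  calc u (m + 1) ^ 2 ≤ (u 1 ^ 2 ^ m) ^ 2 := pow_le_pow_left₀ (hnonneg _ le_rfl) hm 2
    _ = u 1 ^ 2 ^ (m + 1) := by rw [← pow_mul, pow_succ]

theorem fixedPoint_sub_le (hK : 1 ≤ K) (hρ0 : 0 ≤ ρ) (hρ1 : ρ ≤ 1)
    (hrec : ∀ k ≤ K, u (k + 1) = ρ * (u k ^ 2 - 1) + u 1) (hend : u (K + 1) = 0)
    (hnonneg : ∀ k ≤ K, 0 ≤ u k) : ρ - u 1 ≤ K / 2 ^ K := by
  have hu1 : 0 ≤ u 1 := hnonneg 1 hK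
  apply le_div_two_pow_of_le_one_sub_pow hK (by linarith)
  calc ρ - u 1 = ρ * u K ^ 2 := (fixedPoint_mul_sq_eq hrec hend).symm
    _ ≤ u K ^ 2 := mul_le_of_le_one_left (sq_nonneg _) hρ1
    _ ≤ u 1 ^ 2 ^ K := fixedPoint_sq_le_pow hK hρ0 hρ1 hrec hend hnonneg
    _ ≤ (1 - (ρ - u 1)) ^ 2 ^ K := pow_le_pow_left₀ hu1 (by linarith) _

end FixedPoint

theorem two_choice_problematic_bound_general (K : ℕ) (hK : 1 ≤ K) (ρ : ℝ)
    (hρl : 1 - (2 : ℝ) ^ (-(K : ℝ) / 2) ≤ ρ) (hρu : ρ ≤ 1)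
    (u : ℕ → ℝ)
    (hrec : ∀ k ≤ K, u (k + 1) = ρ * ((u k) ^ 2 - 1) + u 1)
    (hend : u (K + 1) = 0)
    (hnonneg : ∀ k ≤ K, 0 ≤ u k) :
    (1 - u 1) + u K ≤
      (2 : ℝ) ^ (-(K : ℝ) / 2) + K / 2 ^ K +
        Real.sqrt ((K / 2 ^ K) / (1 - (2 : ℝ) ^ (-(K : ℝ) / 2))) ∧
    (2 : ℝ) ^ (-(K : ℝ) / 2) + K / 2 ^ K +
        Real.sqrt ((K / 2 ^ K) / (1 - (2 : ℝ) ^ (-(K : ℝ) / 2)))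
      ≤ 4 * Real.sqrt K * (2 : ℝ) ^ (-(K : ℝ) / 2) := by
  set a : ℝ := (2 : ℝ) ^ (-(K : ℝ) / 2)
  have ha0 : 0 < a := by positivity
  have hKa : (K : ℝ) / 2 ^ K = (√K * a) ^ 2 := by
    rw [mul_pow, two_rpow_neg_half_sq, sq_sqrt K.cast_nonneg, div_eq_mul_inv]
  have h2K : (2 : ℝ) ≤ 2 ^ K := le_self_pow₀ one_le_two (by omega)
  have ha34 : a ≤ 3 / 4 := by
    have : a ^ 2 ≤ 1 / 2 := by
      rw [two_rpow_neg_half_sq, ← one_div]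
      gcongr
    nlinarith
  have hε := fixedPoint_sub_le hK (by linarith) hρu hrec hend hnonneg
  have huK : u K ≤ √((K / 2 ^ K) / (1 - a)) := by
    apply le_sqrt_of_sq_le
    rw [le_div_iff₀ (by linarith)]
    nlinarith [fixedPoint_mul_sq_eq hrec hend, sq_nonneg (u K)]
  refine ⟨by linarith, ?_⟩
  rw [hKa]
  apply add_sq_add_sqrt_sq_div_le ha0.le ha34 (one_le_sqrt.2 (by exact_mod_cast hK))
  rw [← abs_of_nonneg (by positivity : 0 ≤ √K * a), ← sq_le_one_iff_abs_le_one, ← hKa,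
    div_le_one (by positivity)]
  exact_mod_cast Nat.lt_two_pow_self.le

/-- For ρ ∈ [1 - 2^{-K/2}, 1], the two-choice fixed point has proportion of problematic
stations (1 - ū_1) + ū_K ≤ 2^{-K/2} + K 2^{-K} + √(K 2^{-K}/(1 - 2^{-K/2})) ≤ 4 √K 2^{-K/2}. -/
theorem two_choice_problematic_bound (K : ℕ) (hK : 1 ≤ K) (ρ : ℝ)
    (hρl : 1 - (2 : ℝ) ^ (-(K : ℝ) / 2) ≤ ρ) (hρu : ρ ≤ 1)
    (u : ℕ → ℝ) (h0 : u 0 = 1)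
    (hrec : ∀ k ≤ K, u (k + 1) = ρ * ((u k) ^ 2 - 1) + u 1)
    (hend : u (K + 1) = 0)
    (hnonneg : ∀ k ≤ K, 0 ≤ u k) :
    (1 - u 1) + u K ≤
      (2 : ℝ) ^ (-(K : ℝ) / 2) + K / 2 ^ K +
        Real.sqrt ((K / 2 ^ K) / (1 - (2 : ℝ) ^ (-(K : ℝ) / 2))) ∧
    (2 : ℝ) ^ (-(K : ℝ) / 2) + K / 2 ^ K +
        Real.sqrt ((K / 2 ^ K) / (1 - (2 : ℝ) ^ (-(K : ℝ) / 2)))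
      ≤ 4 * Real.sqrt K * (2 : ℝ) ^ (-(K : ℝ) / 2) :=
  two_choice_problematic_bound_general K hK ρ hρl hρu u hrec hend hnonneg
end

section
/- Let K ≥ 1 and ρ = 1 − 2^{−K/2}, and let ū be the two-choice fixed point for this ρ. Then Σ_{k=1}^K ū_k ≤ Σ_{k=1}^K exp(−2^{k−1−K/2}) < K/2. Consequently, since s = Σ_{k=1}^K ū_k + ρλ/μ is increasing in ρ, any fleet size s ≥ K/2 + λ/μ forces the fixed-point load to satisfy ρ ≥ 1 − 2^{−K/2}. -/
/-!
Since `ū_{K+1} = 0`, the recursion at `k = K` gives `ū₁ ≤ ρ`, hence `ū_{k+1} ≤ ρ ū_k² ≤ ū_k²` and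
`ū_k ≤ ρ^{2^{k-1}} ≤ exp (-2^{k-1} (1 - ρ))`. For `ρ ≤ 1 - 2^{-K/2}` this is `exp (-t_k)` with
`t_k = 2^{k-1-K/2}`. Since `t_k t_{K+1-k} = 1/2`, the cubic Taylor bound `exp t ≥ 1 + t + t²/2 + t³/6`
shows that the terms `k` and `K + 1 - k` of the sum of these bounds add up to less than `1`.
If `ρ' < 1 - 2^{-K/2}`, both bounds apply to `ρ'`, so `Σ ū_k + ρ'λ/μ < K/2 + λ/μ`.
-/

open Real Finset

lemma one_add_add_add_le_exp {t : ℝ} (ht : 0 ≤ t) : 1 + t + t ^ 2 / 2 + t ^ 3 / 6 ≤ exp t := by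
  have h := sum_le_exp_of_nonneg ht 4
  simp only [sum_range_succ, sum_range_zero, Nat.factorial] at h
  norm_num at h
  linarith

lemma exp_neg_add_exp_neg_lt_one {t s : ℝ} (ht : 0 < t) (hs : 0 < s) (hts : t * s = 1 / 2) :
    exp (-t) + exp (-s) < 1 := by
  set P : ℝ → ℝ := fun x => 1 + x + x ^ 2 / 2 + x ^ 3 / 6 with hP
  have hPt : 0 < P t := by positivity
  have hPs : 0 < P s := by positivity
  have hprod : P t + P s < P t * P s := by
    have hp : 7 / 5 < t + s := by nlinarith [sq_nonneg (t - s)]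
    -- `t * s = 1 / 2` turns `P t * P s - P t - P s` into a polynomial in `t + s ≥ √2` alone
    have key : P t * P s - P t - P s
        = (13 * (t + s) / 24 + ((t + s) ^ 2 - 1) / 6 - 125 / 144) / 2 := by
      simp only [hP]
      linear_combination (1 + (t + s) / 2 + (t + s) ^ 2 / 6 - (t * s + 1 / 2) / 12
        + (t + s) * (t * s + 1 / 2) / 12 + ((t * s) ^ 2 + t * s / 2 + 1 / 4) / 36) * hts
    nlinarith
  calc exp (-t) + exp (-s) ≤ (P t)⁻¹ + (P s)⁻¹ := by
        rw [exp_neg, exp_neg]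
        gcongr <;> exact one_add_add_add_le_exp (by positivity)
    _ < 1 := by
        rw [inv_add_inv hPt.ne' hPs.ne', div_lt_one (by positivity)]
        linarith

lemma sum_Icc_lt_half_of_add_reflect_lt_one {K : ℕ} (hK : 1 ≤ K) (f : ℕ → ℝ)
    (hf : ∀ k ∈ Icc 1 K, f k + f (K + 1 - k) < 1) :
    ∑ k ∈ Icc 1 K, f k < K / 2 := by
  have hreflect : ∑ k ∈ Icc 1 K, f (K + 1 - k) = ∑ k ∈ Icc 1 K, f k := by
    refine sum_nbij' (fun k => K + 1 - k) (fun k => K + 1 - k) ?_ ?_ ?_ ?_ ?_ <;>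
      intro k hk <;> simp only [mem_Icc] at * <;> omega
  have hpairs := sum_lt_sum_of_nonempty (nonempty_Icc.2 hK) hf
  rw [sum_add_distrib, hreflect, sum_const, Nat.card_Icc, add_tsub_cancel_right,
    nsmul_eq_mul, mul_one] at hpairs
  linarith

lemma sum_exp_neg_two_rpow_lt_half {K : ℕ} (hK : 1 ≤ K) :
    ∑ k ∈ Icc 1 K, exp (-(2 : ℝ) ^ ((k : ℝ) - 1 - (K : ℝ) / 2)) < K / 2 := by
  refine sum_Icc_lt_half_of_add_reflect_lt_one hK _ fun k hk => ?_
  have hcast : ((K + 1 - k : ℕ) : ℝ) = K + 1 - k := by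
    rw [Nat.cast_sub (by simp only [mem_Icc] at hk; omega)]; push_cast; ring
  refine exp_neg_add_exp_neg_lt_one (by positivity) (by positivity) ?_
  rw [← rpow_add two_pos, hcast, show (k : ℝ) - 1 - K / 2 + (K + 1 - k - 1 - K / 2) = -1 by ring,
    rpow_neg_one, one_div]

lemma pow_le_exp_neg_mul {x δ : ℝ} (hx : 0 ≤ x) (hxδ : x ≤ 1 - δ) (n : ℕ) :
    x ^ n ≤ exp (-(n * δ)) := by
  calc x ^ n ≤ exp (-δ) ^ n := pow_le_pow_left₀ hx (hxδ.trans (one_sub_le_exp_neg δ)) n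
    _ = exp (-(n * δ)) := by rw [← exp_nat_mul, mul_neg]

lemma le_pow_two_pow_of_le_sq_s12 {v : ℕ → ℝ} {a : ℝ} {n : ℕ} (h0 : v 0 ≤ a)
    (hsq : ∀ k < n, v (k + 1) ≤ v k ^ 2) (hnonneg : ∀ k < n, 0 ≤ v k) :
    ∀ k ≤ n, v k ≤ a ^ 2 ^ k := by
  intro k hk
  induction k with
  | zero => simpa using h0
  | succ k ih =>
    calc v (k + 1) ≤ v k ^ 2 := hsq k hk
      _ ≤ (a ^ 2 ^ k) ^ 2 := pow_le_pow_left₀ (hnonneg k hk) (ih (by omega)) 2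
      _ = a ^ 2 ^ (k + 1) := by rw [← pow_mul, pow_succ]

structure IsTwoChoiceFixedPoint (K : ℕ) (ρ : ℝ) (u : ℕ → ℝ) : Prop where
  succ_eq : ∀ k ≤ K, u (k + 1) = ρ * (u k ^ 2 - 1) + u 1
  last_eq_zero : u (K + 1) = 0
  nonneg : ∀ k ≤ K, 0 ≤ u k

namespace IsTwoChoiceFixedPoint

variable {K : ℕ} {ρ : ℝ} {u : ℕ → ℝ}

lemma one_le (hu : IsTwoChoiceFixedPoint K ρ u) (hρ : 0 ≤ ρ) : u 1 ≤ ρ := by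
  have h := hu.succ_eq K le_rfl
  rw [hu.last_eq_zero] at h
  nlinarith [mul_nonneg hρ (sq_nonneg (u K))]

lemma le_pow_two_pow (hu : IsTwoChoiceFixedPoint K ρ u) (hρ₀ : 0 ≤ ρ) (hρ₁ : ρ ≤ 1)
    {k : ℕ} (hk₁ : 1 ≤ k) (hkK : k ≤ K) : u k ≤ ρ ^ 2 ^ (k - 1) := by
  have hsq : ∀ j < K - 1, u (j + 1 + 1) ≤ u (j + 1) ^ 2 := fun j hj => by
    have := hu.succ_eq (j + 1) (by omega)
    nlinarith [hu.one_le hρ₀, sq_nonneg (u (j + 1))]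
  obtain ⟨j, rfl⟩ : ∃ j, k = j + 1 := ⟨k - 1, by omega⟩
  exact le_pow_two_pow_of_le_sq_s12 (v := fun j => u (j + 1)) (hu.one_le hρ₀) hsq
    (fun j hj => hu.nonneg _ (by omega)) j (by omega)

lemma le_exp (hu : IsTwoChoiceFixedPoint K ρ u) (hρ₀ : 0 ≤ ρ)
    (hρ : ρ ≤ 1 - (2 : ℝ) ^ (-(K : ℝ) / 2)) {k : ℕ} (hk₁ : 1 ≤ k) (hkK : k ≤ K) :
    u k ≤ exp (-(2 : ℝ) ^ ((k : ℝ) - 1 - (K : ℝ) / 2)) := by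
  have hρ₁ : ρ ≤ 1 := hρ.trans (by linarith [rpow_pos_of_pos two_pos (-(K : ℝ) / 2)])
  have hexp : (2 : ℝ) ^ ((k : ℝ) - 1 - (K : ℝ) / 2)
      = ((2 ^ (k - 1) : ℕ) : ℝ) * 2 ^ (-(K : ℝ) / 2) := by
    rw [show (k : ℝ) - 1 - (K : ℝ) / 2 = ((k - 1 : ℕ) : ℝ) + -(K : ℝ) / 2 by
      rw [Nat.cast_sub hk₁]; push_cast; ring, rpow_add two_pos, rpow_natCast, Nat.cast_pow,
      Nat.cast_ofNat]
  rw [hexp]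
  exact (hu.le_pow_two_pow hρ₀ hρ₁ hk₁ hkK).trans (pow_le_exp_neg_mul hρ₀ hρ _)

lemma sum_le_sum_exp (hu : IsTwoChoiceFixedPoint K ρ u) (hρ₀ : 0 ≤ ρ)
    (hρ : ρ ≤ 1 - (2 : ℝ) ^ (-(K : ℝ) / 2)) :
    ∑ k ∈ Icc 1 K, u k ≤ ∑ k ∈ Icc 1 K, exp (-(2 : ℝ) ^ ((k : ℝ) - 1 - (K : ℝ) / 2)) :=
  sum_le_sum fun _ hk => hu.le_exp hρ₀ hρ (mem_Icc.1 hk).1 (mem_Icc.1 hk).2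

end IsTwoChoiceFixedPoint

theorem two_choice_sum_bound_general (K : ℕ) (hK : 1 ≤ K) (lam mu : ℝ)
    (hlam : 0 < lam) (hmu : 0 < mu)
    (ρ : ℝ) (hρ : ρ = 1 - (2 : ℝ) ^ (-(K : ℝ) / 2))
    (u : ℕ → ℝ)
    (hrec : ∀ k ≤ K, u (k + 1) = ρ * ((u k) ^ 2 - 1) + u 1)
    (hend : u (K + 1) = 0)
    (hnonneg : ∀ k ≤ K, 0 ≤ u k) :
    (∑ k ∈ Finset.Icc 1 K, u k ≤
        ∑ k ∈ Finset.Icc 1 K, Real.exp (-(2 : ℝ) ^ ((k : ℝ) - 1 - (K : ℝ) / 2))) ∧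
    (∑ k ∈ Finset.Icc 1 K, Real.exp (-(2 : ℝ) ^ ((k : ℝ) - 1 - (K : ℝ) / 2)) < K / 2) ∧
    (∀ ρ' : ℝ, 0 < ρ' → ρ' ≤ 1 →
      ∀ u' : ℕ → ℝ, u' 0 = 1 →
        (∀ k ≤ K, u' (k + 1) = ρ' * ((u' k) ^ 2 - 1) + u' 1) →
        u' (K + 1) = 0 → (∀ k ≤ K, 0 ≤ u' k) →
        (K : ℝ) / 2 + lam / mu ≤ (∑ k ∈ Finset.Icc 1 K, u' k) + ρ' * lam / mu →
        1 - (2 : ℝ) ^ (-(K : ℝ) / 2) ≤ ρ') := by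
  have hρ₀ : 0 ≤ ρ := hρ ▸ sub_nonneg.2 (rpow_le_one_of_one_le_of_nonpos one_le_two
    (by linarith [(K.cast_nonneg : (0 : ℝ) ≤ K)]))
  refine ⟨IsTwoChoiceFixedPoint.sum_le_sum_exp ⟨hrec, hend, hnonneg⟩ hρ₀ hρ.le,
    sum_exp_neg_two_rpow_lt_half hK, ?_⟩
  intro ρ' hρ'₀ hρ'₁ u' _ hrec' hend' hnonneg' hs
  by_contra! hρ'
  have hsum := (IsTwoChoiceFixedPoint.sum_le_sum_exp ⟨hrec', hend', hnonneg'⟩ hρ'₀.le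
    hρ'.le).trans_lt (sum_exp_neg_two_rpow_lt_half hK)
  have hload : ρ' * lam / mu ≤ lam / mu := by
    rw [mul_div_assoc]
    exact mul_le_of_le_one_left (by positivity) hρ'₁
  linarith

/-- At ρ = 1 - 2^{-K/2}, the two-choice fixed point satisfies
Σ_{k=1}^K ū_k ≤ Σ_{k=1}^K exp(-2^{k-1-K/2}) < K/2; consequently (since
s = Σ ū_k + ρλ/μ is increasing in ρ) any fleet size s ≥ K/2 + λ/μ forces ρ ≥ 1 - 2^{-K/2}. -/
theorem two_choice_sum_bound (K : ℕ) (hK : 1 ≤ K) (lam mu : ℝ)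
    (hlam : 0 < lam) (hmu : 0 < mu)
    (ρ : ℝ) (hρ : ρ = 1 - (2 : ℝ) ^ (-(K : ℝ) / 2))
    (u : ℕ → ℝ) (h0 : u 0 = 1)
    (hrec : ∀ k ≤ K, u (k + 1) = ρ * ((u k) ^ 2 - 1) + u 1)
    (hend : u (K + 1) = 0)
    (hnonneg : ∀ k ≤ K, 0 ≤ u k) :
    (∑ k ∈ Finset.Icc 1 K, u k ≤
        ∑ k ∈ Finset.Icc 1 K, Real.exp (-(2 : ℝ) ^ ((k : ℝ) - 1 - (K : ℝ) / 2))) ∧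
    (∑ k ∈ Finset.Icc 1 K, Real.exp (-(2 : ℝ) ^ ((k : ℝ) - 1 - (K : ℝ) / 2)) < K / 2) ∧
    (∀ ρ' : ℝ, 0 < ρ' → ρ' ≤ 1 →
      ∀ u' : ℕ → ℝ, u' 0 = 1 →
        (∀ k ≤ K, u' (k + 1) = ρ' * ((u' k) ^ 2 - 1) + u' 1) →
        u' (K + 1) = 0 → (∀ k ≤ K, 0 ≤ u' k) →
        (K : ℝ) / 2 + lam / mu ≤ (∑ k ∈ Finset.Icc 1 K, u' k) + ρ' * lam / mu →
        1 - (2 : ℝ) ^ (-(K : ℝ) / 2) ≤ ρ') :=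
  two_choice_sum_bound_general K hK lam mu hlam hmu ρ hρ u hrec hend hnonneg
end

section
/- Let K ≥ 1 and ρ = 1, and let ū be the two-choice fixed point with ε = 1 − ū_1 ≤ K·2^{−K}. Then ū_k ≥ max(0, 1 − 2^k ε) for all k, and Σ_{k=1}^K ū_k ≥ K − log₂K − 3. -/
/-!
With `ε = 1 - u 1` the recursion reads `u (k + 1) = u k ^ 2 - ε`, `u 0 = 1`, and `ε ≥ 0` because
otherwise `u` would never drop below `1`. The bounds `v k = 1 - (2 ^ k - 1) * ε` satisfy
`v (k + 1) = 2 * v k - 1 - ε ≤ v k ^ 2 - ε`, so they stay below `u` while they are nonnegative,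
whence `u k ≥ 1 - 2 ^ k * ε`. Summing these bounds up to `m = K - ⌊log₂ K⌋ - 1`, where
`2 ^ (m + 1) * ε ≤ 2 ^ (m + 1) * K / 2 ^ K ≤ 2`, gives `m - 2 ≥ K - log₂ K - 3`.
-/

open Finset

section SqSubRecursion

variable {u : ℕ → ℝ} {ε : ℝ} {n : ℕ}

theorem nonneg_of_sq_sub_recursion (h0 : u 0 = 1) (hrec : ∀ k < n, u (k + 1) = u k ^ 2 - ε)
    (hn : u n < 1) : 0 ≤ ε := by
  by_contra! hε
  have one_le : ∀ k ≤ n, 1 ≤ u k := by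
    intro k
    induction k with
    | zero => exact fun _ => h0.ge
    | succ k ih =>
      intro hk
      have := ih (by omega)
      rw [hrec k hk]
      nlinarith
  linarith [one_le n le_rfl]

theorem one_sub_two_pow_sub_one_mul_le (h0 : u 0 = 1)
    (hrec : ∀ k < n, u (k + 1) = u k ^ 2 - ε) (hε : 0 ≤ ε) :
    ∀ k ≤ n, 0 ≤ 1 - (2 ^ k - 1) * ε → 1 - (2 ^ k - 1) * ε ≤ u k := by
  intro k
  induction k with
  | zero => intro _ _; simp [h0]
  | succ k ih =>
    intro hk hv_succ
    set v := 1 - (2 ^ k - 1) * ε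
    have hstep : 1 - (2 ^ (k + 1) - 1) * ε = 2 * v - 1 - ε := by ring
    have hv : 0 ≤ v := by linarith
    have hvu := ih (by omega) hv
    rw [hrec k hk, hstep]
    nlinarith [sq_nonneg (v - 1), pow_le_pow_left₀ hv hvu 2]

theorem max_zero_one_sub_two_pow_mul_le (h0 : u 0 = 1)
    (hrec : ∀ k < n, u (k + 1) = u k ^ 2 - ε) (hε : 0 ≤ ε) (hu : ∀ k ≤ n, 0 ≤ u k) :
    ∀ k ≤ n, max 0 (1 - 2 ^ k * ε) ≤ u k := by
  intro k hk
  refine max_le (hu k hk) ?_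
  rcases le_or_gt (1 - 2 ^ k * ε) 0 with h | h
  · exact h.trans (hu k hk)
  · calc 1 - 2 ^ k * ε ≤ 1 - (2 ^ k - 1) * ε := by linarith
      _ ≤ u k := one_sub_two_pow_sub_one_mul_le h0 hrec hε k hk (by linarith)

end SqSubRecursion

theorem sum_Icc_one_two_pow {R : Type*} [CommRing R] (m : ℕ) :
    ∑ k ∈ Icc 1 m, (2 : R) ^ k = 2 ^ (m + 1) - 2 := by
  induction m with
  | zero => simp
  | succ m ih => rw [sum_Icc_succ_top (by omega), ih]; ring

theorem sub_two_le_sum_Icc {u : ℕ → ℝ} {ε : ℝ} {m n : ℕ} (hε : 0 ≤ ε)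
    (hmε : 2 ^ (m + 1) * ε ≤ 2) (hmn : m ≤ n) (hlow : ∀ k ≤ m, 1 - 2 ^ k * ε ≤ u k)
    (hu : ∀ k ≤ n, 0 ≤ u k) : (m : ℝ) - 2 ≤ ∑ k ∈ Icc 1 n, u k :=
  calc (m : ℝ) - 2 ≤ m - (2 ^ (m + 1) - 2) * ε := by linarith
    _ = ∑ k ∈ Icc 1 m, (1 - 2 ^ k * ε) := by
      rw [sum_sub_distrib, ← sum_mul, sum_Icc_one_two_pow]
      simp
    _ ≤ ∑ k ∈ Icc 1 m, u k := sum_le_sum fun k hk => hlow k (mem_Icc.mp hk).2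
    _ ≤ ∑ k ∈ Icc 1 n, u k :=
      sum_le_sum_of_subset_of_nonneg (Icc_subset_Icc_right hmn)
        fun k hk _ => hu k (mem_Icc.mp hk).2

theorem exists_le_two_pow_succ_mul_le_two {K : ℕ} (hK : 1 ≤ K) {ε : ℝ}
    (hε : ε ≤ K / 2 ^ K) :
    ∃ m ≤ K, (K : ℝ) - Real.logb 2 K - 1 ≤ m ∧ 2 ^ (m + 1) * ε ≤ 2 := by
  set c := Nat.log 2 K + 1
  have hcK : c ≤ K := Nat.log_lt_self 2 (by omega)
  have hKc : (K : ℝ) < 2 ^ c := by exact_mod_cast Nat.lt_pow_succ_log_self one_lt_two K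
  refine ⟨K - c, Nat.sub_le K c, ?_, ?_⟩
  · rw [Nat.cast_sub hcK]
    have := Real.natLog_le_logb K 2
    push_cast [c] at this ⊢
    linarith
  · have hsplit : (2 : ℝ) ^ K = 2 ^ (K - c) * 2 ^ c := by rw [← pow_add, Nat.sub_add_cancel hcK]
    calc (2 : ℝ) ^ (K - c + 1) * ε ≤ 2 ^ (K - c + 1) * (K / 2 ^ K) := by gcongr
      _ ≤ 2 ^ (K - c + 1) * (2 ^ c / 2 ^ K) := by gcongr
      _ = 2 := by rw [hsplit]; field_simp; ring

/-- At ρ = 1, the two-choice fixed point with ε = 1 - ū_1 ≤ K 2^{-K} satisfies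
ū_k ≥ max(0, 1 - 2^k ε) and Σ_{k=1}^K ū_k ≥ K - log₂ K - 3. -/
theorem two_choice_sum_lower_bound (K : ℕ) (hK : 1 ≤ K)
    (u : ℕ → ℝ) (h0 : u 0 = 1)
    (hrec : ∀ k ≤ K, u (k + 1) = 1 * ((u k) ^ 2 - 1) + u 1)
    (hend : u (K + 1) = 0)
    (hnonneg : ∀ k ≤ K, 0 ≤ u k)
    (ε : ℝ) (hε : ε = 1 - u 1) (hεle : ε ≤ K / 2 ^ K) :
    (∀ k ≤ K + 1, max 0 (1 - 2 ^ k * ε) ≤ u k) ∧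
    (K : ℝ) - Real.logb 2 K - 3 ≤ ∑ k ∈ Finset.Icc 1 K, u k := by
  have hrec' : ∀ k < K + 1, u (k + 1) = u k ^ 2 - ε := fun k hk => by
    rw [hrec k (by omega), hε]; ring
  have hu : ∀ k ≤ K + 1, 0 ≤ u k := fun k hk => by
    rcases Nat.lt_or_eq_of_le hk with hk | rfl
    · exact hnonneg k (by omega)
    · exact hend.ge
  have hε0 : 0 ≤ ε := nonneg_of_sq_sub_recursion h0 hrec' (by rw [hend]; norm_num)
  have hlow := max_zero_one_sub_two_pow_mul_le h0 hrec' hε0 hu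
  refine ⟨hlow, ?_⟩
  obtain ⟨m, hmK, hm, hmε⟩ := exists_le_two_pow_succ_mul_le_two hK hεle
  calc (K : ℝ) - Real.logb 2 K - 3 ≤ m - 2 := by linarith
    _ ≤ ∑ k ∈ Icc 1 K, u k :=
      sub_two_le_sum_Icc hε0 hmε hmK
        (fun k hk => (le_max_right _ _).trans (hlow k (by omega))) hnonneg
end

section
/- For any integer K ≥ 1, the mean of the truncated geometric distribution m(ρ) = Σ_{k=1}^K k ρ^k (1−ρ)/(1−ρ^{K+1}) (with m(1) = K/2) is a strictly increasing continuous function of ρ on (0,∞), with lim_{ρ→0} m(ρ) = 0 and lim_{ρ→∞} m(ρ) = K. -/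
/-- Mean m(ρ) = Σ_{k=1}^K k ν_ρ(k) of the truncated geometric distribution (m(1) = K/2). -/
noncomputable def m (K : ℕ) (ρ : ℝ) : ℝ := ∑ k ∈ Finset.Icc 1 K, (k : ℝ) * nu K ρ k

open Finset Filter Topology

theorem two_mul_sum_mul_sum_sub_sum_mul_sum {ι R : Type*} [CommRing R] (s : Finset ι)
    (x u v : ι → R) :
    2 * ((∑ j ∈ s, x j * u j) * ∑ i ∈ s, v i - (∑ j ∈ s, x j * v j) * ∑ i ∈ s, u i) =
      ∑ i ∈ s, ∑ j ∈ s, (x j - x i) * (v i * u j - v j * u i) := by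
  have swap : ∑ i ∈ s, ∑ j ∈ s, x i * (v i * u j - v j * u i) =
      -∑ i ∈ s, ∑ j ∈ s, x j * (v i * u j - v j * u i) := by
    rw [sum_comm, ← sum_neg_distrib]
    refine sum_congr rfl fun i _ => ?_
    rw [← sum_neg_distrib]
    exact sum_congr rfl fun j _ => by ring
  have expand : ∑ i ∈ s, ∑ j ∈ s, x j * (v i * u j - v j * u i) =
      (∑ j ∈ s, x j * u j) * ∑ i ∈ s, v i - (∑ j ∈ s, x j * v j) * ∑ i ∈ s, u i := by
    simp only [mul_sub, sum_sub_distrib, mul_sum, sum_mul]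
    congr 1 <;> exact sum_congr rfl fun i _ => sum_congr rfl fun j _ => by ring
  simp only [sub_mul, sum_sub_distrib, swap, expand]
  ring

section PowMulPow

variable {R : Type*} [CommRing R] [LinearOrder R] [IsStrictOrderedRing R] {a b : R}

theorem pow_mul_pow_le_pow_mul_pow_s18 (ha : 0 ≤ a) (hab : a ≤ b) {i j : ℕ} (hij : i ≤ j) :
    a ^ j * b ^ i ≤ a ^ i * b ^ j := by
  obtain ⟨c, rfl⟩ := Nat.exists_eq_add_of_le hij
  have hb : 0 ≤ b := ha.trans hab
  calc a ^ (i + c) * b ^ i = a ^ i * b ^ i * a ^ c := by ring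
    _ ≤ a ^ i * b ^ i * b ^ c := by gcongr
    _ = a ^ i * b ^ (i + c) := by ring

theorem sub_mul_pow_mul_pow_sub_nonneg (ha : 0 ≤ a) (hab : a ≤ b) (i j : ℕ) :
    0 ≤ ((j : R) - i) * (a ^ i * b ^ j - a ^ j * b ^ i) := by
  rcases le_total i j with hij | hji
  · exact mul_nonneg (by simpa using hij) (sub_nonneg.2 (pow_mul_pow_le_pow_mul_pow_s18 ha hab hij))
  · exact mul_nonneg_of_nonpos_of_nonpos (by simpa using hji)
      (sub_nonpos.2 (pow_mul_pow_le_pow_mul_pow_s18 ha hab hji))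

end PowMulPow

namespace TruncatedGeometric

def normalizer (K : ℕ) (ρ : ℝ) : ℝ := ∑ k ∈ range (K + 1), ρ ^ k

def weightedSum (K : ℕ) (ρ : ℝ) : ℝ := ∑ k ∈ range (K + 1), (k : ℝ) * ρ ^ k

variable {K : ℕ} {ρ : ℝ}

theorem normalizer_pos (hρ : 0 ≤ ρ) : 0 < normalizer K ρ :=
  geom_sum_pos hρ K.succ_ne_zero

/-- This holds for every real `ρ`: when `1 - ρ ^ (K + 1) = 0` with `ρ ≠ 1`, both sides are `0`. -/
theorem nu_eq_div_normalizer (K : ℕ) (ρ : ℝ) (k : ℕ) : nu K ρ k = ρ ^ k / normalizer K ρ := by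
  unfold nu normalizer
  split_ifs with h
  · simp [h]
  · rw [← mul_neg_geom_sum, mul_comm (1 - ρ), mul_div_mul_right _ _ (sub_ne_zero.2 (Ne.symm h))]

theorem m_eq_div (K : ℕ) (ρ : ℝ) : m K ρ = weightedSum K ρ / normalizer K ρ := by
  simp only [m, weightedSum, nu_eq_div_normalizer, mul_div_assoc', ← sum_div]
  rw [range_eq_Ico, sum_eq_sum_Ico_succ_bot K.succ_pos, zero_add, Nat.succ_eq_add_one,
    Finset.Ico_add_one_right_eq_Icc]
  simp

theorem m_zero (K : ℕ) : m K 0 = 0 :=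
  sum_eq_zero fun k hk => by simp [nu, Nat.one_le_iff_ne_zero.1 (mem_Icc.1 hk).1]

theorem weightedSum_mul_normalizer_lt (hK : 1 ≤ K) {a b : ℝ} (ha : 0 ≤ a) (hab : a < b) :
    weightedSum K a * normalizer K b < weightedSum K b * normalizer K a := by
  have hpos : 0 < ∑ i ∈ range (K + 1), ∑ j ∈ range (K + 1),
      ((j : ℝ) - i) * (a ^ i * b ^ j - a ^ j * b ^ i) := by
    rw [← sum_product']
    refine sum_pos' (fun p _ => sub_mul_pow_mul_pow_sub_nonneg ha hab.le p.1 p.2)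
      ⟨(0, 1), by simp; omega, by simpa using hab⟩
  rw [← two_mul_sum_mul_sum_sub_sum_mul_sum] at hpos
  simp only [weightedSum, normalizer]
  linarith

theorem m_strictMonoOn (hK : 1 ≤ K) : StrictMonoOn (m K) (Set.Ici 0) := by
  intro a ha b hb hab
  rw [m_eq_div, m_eq_div, div_lt_div_iff₀ (normalizer_pos ha) (normalizer_pos hb)]
  exact weightedSum_mul_normalizer_lt hK ha hab

theorem m_continuousOn : ContinuousOn (m K) (Set.Ici 0) := by
  rw [funext (m_eq_div K)]
  exact ContinuousOn.div (by unfold weightedSum; fun_prop) (by unfold normalizer; fun_prop)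
    fun ρ hρ => (normalizer_pos hρ).ne'

theorem pow_mul_normalizer_inv (hρ : ρ ≠ 0) : ρ ^ K * normalizer K ρ⁻¹ = normalizer K ρ := by
  rw [normalizer, normalizer, mul_sum]
  conv_rhs => rw [← sum_range_reflect]
  refine sum_congr rfl fun k hk => ?_
  have hkK : k ≤ K := Nat.lt_succ_iff.1 (mem_range.1 hk)
  rw [Nat.add_sub_cancel, pow_sub₀ ρ hρ hkK, inv_pow]

theorem pow_mul_weightedSum_inv (hρ : ρ ≠ 0) :
    ρ ^ K * weightedSum K ρ⁻¹ = K * normalizer K ρ - weightedSum K ρ := by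
  rw [weightedSum, weightedSum, normalizer, mul_sum, mul_sum, ← sum_sub_distrib]
  conv_rhs => rw [← sum_range_reflect]
  refine sum_congr rfl fun k hk => ?_
  have hkK : k ≤ K := Nat.lt_succ_iff.1 (mem_range.1 hk)
  rw [Nat.add_sub_cancel, pow_sub₀ ρ hρ hkK, inv_pow, Nat.cast_sub hkK]
  ring

theorem m_add_m_inv (hρ : 0 < ρ) : m K ρ + m K ρ⁻¹ = K := by
  have hZ := (normalizer_pos (K := K) hρ.le).ne'
  have hpow : ρ ^ K ≠ 0 := pow_ne_zero K hρ.ne'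
  rw [m_eq_div, m_eq_div, ← mul_div_mul_left (weightedSum K ρ⁻¹) _ hpow,
    pow_mul_normalizer_inv hρ.ne', pow_mul_weightedSum_inv hρ.ne']
  field_simp
  ring

end TruncatedGeometric

open TruncatedGeometric

/-- m is a strictly increasing continuous function on (0,∞) with m(1) = K/2,
m(ρ) → 0 as ρ → 0⁺ and m(ρ) → K as ρ → ∞. -/
theorem truncated_geometric_mean_mono (K : ℕ) (hK : 1 ≤ K) :
    StrictMonoOn (m K) (Set.Ioi (0 : ℝ)) ∧
    ContinuousOn (m K) (Set.Ioi (0 : ℝ)) ∧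
    m K 1 = K / 2 ∧
    Filter.Tendsto (m K) (nhdsWithin 0 (Set.Ioi 0)) (nhds 0) ∧
    Filter.Tendsto (m K) Filter.atTop (nhds (K : ℝ)) := by
  have hzero : Tendsto (m K) (𝓝[>] 0) (𝓝 0) := by
    have := (m_continuousOn (K := K) 0 Set.self_mem_Ici).mono Set.Ioi_subset_Ici_self
    rwa [ContinuousWithinAt, m_zero] at this
  refine ⟨(m_strictMonoOn hK).mono Set.Ioi_subset_Ici_self,
    m_continuousOn.mono Set.Ioi_subset_Ici_self, ?_, hzero, ?_⟩
  · linarith [inv_one (G := ℝ) ▸ m_add_m_inv (K := K) one_pos]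
  · have hinf : Tendsto (fun ρ => K - m K ρ⁻¹) atTop (𝓝 ((K : ℝ) - 0)) :=
      tendsto_const_nhds.sub (hzero.comp tendsto_inv_atTop_nhdsGT_zero)
    rw [sub_zero] at hinf
    refine hinf.congr' ?_
    filter_upwards [eventually_gt_atTop 0] with ρ hρ
    linarith [m_add_m_inv (K := K) hρ]
end
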